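/- Let D be a finitely generated abelian group, S a noetherian D-graded ring, and M ⊆ D a finitely generated submonoid. Then the Veronese subring S_M = ⊕_{d∈M} S_d is a noetherian ring. -/

import Mathlib

/-!
By Hilbert's basis theorem the monoid algebra `S[M]` is noetherian. Grade it by `D`, giving
`single m s` with `s ∈ S_d` the degree `d - m`. Its degree-zero part `⊕_{m ∈ M} S_m t^m` is a
retract of `S[M]` by a map linear over that part (project each coefficient of `t^m` to degree
`m`), so ideals of the degree-zero part are contractions of their extensions, and it is
noetherian. The augmentation `S[M] → S`, `t ↦ 1`, maps it onto `S_M`.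
-/

/-- The Veronese subring `S_M = ⊕_{d ∈ M} S_d` of a `D`-graded ring, for a submonoid
`M ⊆ D`: since `M` contains `0` and is closed under addition, this is the subring
generated by the homogeneous pieces of degrees in `M`. -/
def veroneseSubmonoidSubring {D S : Type*} [AddCommGroup D] [CommRing S]
    (𝒜 : D → AddSubgroup S) (M : AddSubmonoid D) : Subring S :=
  Subring.closure (⋃ d ∈ M, (𝒜 d : Set S))

section Retraction

variable {A T : Type*} [CommRing A] [CommRing T] [Algebra A T]

theorem Ideal.map_le_map_iff_of_retraction (ρ : T →ₗ[A] A)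
    (hρ : ∀ a, ρ (algebraMap A T a) = a) {I J : Ideal A} :
    I.map (algebraMap A T) ≤ J.map (algebraMap A T) ↔ I ≤ J := by
  refine ⟨fun h a ha => ?_, Ideal.map_mono⟩
  have hmem : algebraMap A T a ∈ J • (⊤ : Submodule A T) := by
    rw [Ideal.smul_top_eq_map]
    exact h (Ideal.mem_map_of_mem _ ha)
  have : ρ (algebraMap A T a) ∈ J • (⊤ : Submodule A T).map ρ :=
    Submodule.map_smul'' J ⊤ ρ ▸ Submodule.mem_map_of_mem hmem
  rw [hρ] at this
  simpa only [smul_eq_mul, Ideal.mul_top] using Submodule.smul_mono (le_refl J) le_top this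

theorem IsNoetherianRing.of_retraction [IsNoetherianRing T] (ρ : T →ₗ[A] A)
    (hρ : ∀ a, ρ (algebraMap A T a) = a) : IsNoetherianRing A := by
  rw [isNoetherianRing_iff, isNoetherian_iff']
  exact (OrderEmbedding.ofMapLEIff _ fun _ _ =>
    Ideal.map_le_map_iff_of_retraction ρ hρ).wellFoundedGT

end Retraction

namespace AddMonoidAlgebra

variable {D S : Type*} [AddCommGroup D] [CommRing S] (𝒜 : D → AddSubgroup S) (M : AddSubmonoid D)

theorem coeff_single_mem {m : M} {s : S} (hs : s ∈ 𝒜 m) (m' : M) :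
    (single m s).coeff m' ∈ 𝒜 m' := by
  classical
  rw [coeff_single, Finsupp.single_apply]
  split_ifs with h
  · exact h ▸ hs
  · exact zero_mem _

variable [DecidableEq D] [GradedRing 𝒜]

/-- The degree-zero part of `S[M]` for the grading `deg (single m s) = d - m`, `s ∈ 𝒜 d`. -/
def diagonalSubring : Subring (AddMonoidAlgebra S M) where
  carrier := {f | ∀ m : M, f.coeff m ∈ 𝒜 m}
  zero_mem' _ := zero_mem _
  one_mem' m := by
    rw [one_def]
    exact coeff_single_mem 𝒜 M (SetLike.one_mem_graded 𝒜) m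
  add_mem' hf hg m := add_mem (hf m) (hg m)
  neg_mem' hf m := neg_mem (hf m)
  mul_mem' {f g} hf hg m := by
    rw [coeff_mul]
    refine sum_mem fun a _ => sum_mem fun b _ => ?_
    dsimp only
    split_ifs with h
    · rw [← h, AddSubmonoid.coe_add]
      exact SetLike.mul_mem_graded (hf a) (hg b)
    · exact zero_mem _

noncomputable def diagonalProjAddHom : AddMonoidAlgebra S M →+ AddMonoidAlgebra S M where
  toFun f := ofCoeff <| Finsupp.onFinset f.coeff.support (fun m => GradedRing.proj 𝒜 m (f.coeff m))
    fun m hm => Finsupp.mem_support_iff.2 fun h => hm (by rw [h, map_zero])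
  map_zero' := by ext; simp
  map_add' f g := by ext; simp

@[simp]
theorem coeff_diagonalProjAddHom (f : AddMonoidAlgebra S M) (m : M) :
    (diagonalProjAddHom 𝒜 M f).coeff m = GradedRing.proj 𝒜 m (f.coeff m) := rfl

theorem diagonalProjAddHom_single (m : M) (s : S) :
    diagonalProjAddHom 𝒜 M (single m s) = single m (GradedRing.proj 𝒜 m s) := by
  ext m'
  rcases eq_or_ne m m' with rfl | h
  · simp
  · simp [coeff_single, Finsupp.single_eq_of_ne' h]

theorem diagonalProjAddHom_mem (f : AddMonoidAlgebra S M) :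
    diagonalProjAddHom 𝒜 M f ∈ diagonalSubring 𝒜 M := fun m => by
  simp only [coeff_diagonalProjAddHom, GradedRing.proj_apply, SetLike.coe_mem]

theorem diagonalProjAddHom_of_mem {f : AddMonoidAlgebra S M} (hf : f ∈ diagonalSubring 𝒜 M) :
    diagonalProjAddHom 𝒜 M f = f := by
  ext m
  rw [coeff_diagonalProjAddHom, GradedRing.proj_apply, DirectSum.decompose_of_mem_same 𝒜 (hf m)]

theorem diagonalProjAddHom_single_mul {m : M} {s : S} (hs : s ∈ 𝒜 m) (f : AddMonoidAlgebra S M) :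
    diagonalProjAddHom 𝒜 M (single m s * f) = single m s * diagonalProjAddHom 𝒜 M f := by
  induction f using induction_linear with
  | zero => simp
  | add f g hf hg => rw [mul_add, map_add, map_add, mul_add, hf, hg]
  | single m' s' =>
    rw [single_mul_single, diagonalProjAddHom_single, diagonalProjAddHom_single, single_mul_single,
      GradedRing.proj_apply, GradedRing.proj_apply, AddSubmonoid.coe_add,
      DirectSum.coe_decompose_mul_add_of_left_mem 𝒜 hs]

theorem diagonalProjAddHom_mul {f : AddMonoidAlgebra S M} (hf : f ∈ diagonalSubring 𝒜 M)
    (g : AddMonoidAlgebra S M) :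
    diagonalProjAddHom 𝒜 M (f * g) = f * diagonalProjAddHom 𝒜 M g := by
  rw [← sum_coeff_single f, Finsupp.sum_mul, Finsupp.sum_mul, map_finsuppSum]
  exact Finset.sum_congr rfl fun m _ => diagonalProjAddHom_single_mul 𝒜 M (hf m) g

noncomputable def diagonalProj :
    AddMonoidAlgebra S M →ₗ[diagonalSubring 𝒜 M] diagonalSubring 𝒜 M where
  toFun f := ⟨diagonalProjAddHom 𝒜 M f, diagonalProjAddHom_mem 𝒜 M f⟩
  map_add' f g := Subtype.ext (map_add _ f g)
  map_smul' a f := Subtype.ext (diagonalProjAddHom_mul 𝒜 M a.2 f)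

theorem isNoetherianRing_diagonalSubring [IsNoetherianRing S] (hM : M.FG) :
    IsNoetherianRing (diagonalSubring 𝒜 M) := by
  have : AddMonoid.FG M := (AddMonoid.fg_iff_addSubmonoid_fg M).2 hM
  have : IsNoetherianRing (AddMonoidAlgebra S M) := Algebra.FiniteType.isNoetherianRing S _
  exact IsNoetherianRing.of_retraction (diagonalProj 𝒜 M) fun a =>
    Subtype.ext (diagonalProjAddHom_of_mem 𝒜 M a.2)

theorem map_lift_one_diagonalSubring :
    (diagonalSubring 𝒜 M).map (lift S S M 1).toRingHom = veroneseSubmonoidSubring 𝒜 M := by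
  refine le_antisymm ?_ (Subring.closure_le.2 ?_)
  · rintro _ ⟨f, hf, rfl⟩
    rw [← sum_coeff_single f, map_finsuppSum]
    refine sum_mem fun m _ => ?_
    simp only [AlgHom.toRingHom_eq_coe, RingHom.coe_coe, lift_single, MonoidHom.one_apply,
      smul_eq_mul, mul_one]
    exact Subring.subset_closure (Set.mem_biUnion m.2 (hf m))
  · intro x hx
    simp only [Set.mem_iUnion, SetLike.mem_coe] at hx
    obtain ⟨d, hd, hxd⟩ := hx
    exact ⟨single ⟨d, hd⟩ x, coeff_single_mem 𝒜 M hxd, by simp [lift_single]⟩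

end AddMonoidAlgebra

theorem Subring.isNoetherianRing_map {R T : Type*} [CommRing R] [CommRing T] (f : R →+* T)
    (s : Subring R) [IsNoetherianRing s] : IsNoetherianRing (s.map f) := by
  rw [← Subring.range_subtype s, RingHom.map_range]
  exact isNoetherianRing_of_surjective _ _ _ (f.comp s.subtype).rangeRestrict_surjective

theorem stmt_3 {D S : Type*} [AddCommGroup D] [DecidableEq D]
    [CommRing S] (𝒜 : D → AddSubgroup S) [GradedRing 𝒜] [IsNoetherianRing S]
    (M : AddSubmonoid D) (hM : M.FG) :
    IsNoetherianRing (veroneseSubmonoidSubring 𝒜 M) := by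
  have := AddMonoidAlgebra.isNoetherianRing_diagonalSubring 𝒜 M hM
  rw [← AddMonoidAlgebra.map_lift_one_diagonalSubring]
  exact Subring.isNoetherianRing_map _ _
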